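/- Let c_v > 0, 0 < ϱ₋ < ϱ₊, p₋, p₊ > 0, ϱ₁ > ϱ₊ and v₋ ∈ ℝ; set R := ϱ₋ − ϱ₊ and, for u > 0, v₊ := v₋ − u, A := ϱ₋v₋ − ϱ₊v₊, B := ϱ₋ϱ₊u² − (ϱ₊ − ϱ₋)(p₊ − p₋), μ₀ := A/R − (1/R)·√(B(ϱ₁−ϱ₊)/(ϱ₁−ϱ₋)), μ₁ := A/R − (1/R)·√(B(ϱ₁−ϱ₋)/(ϱ₁−ϱ₊)), Y := ϱ₁ϱ₊·(v₋+μ₀)/(v₋−μ₀) + ϱ₁ϱ₋·(μ₁+v₊)/(μ₁−v₊), X := ϱ₊ϱ₋(p₋ − p₊) + (2c_v+1)ϱ₁(ϱ₋p₊ − ϱ₊p₋), Z := p₊ + ((ϱ₁−ϱ₊)ϱ₊/ϱ₁)·(v₊ − μ₁)², p₁ := (YZ − X)/(Y + ϱ₁R), and ε₁ := (ϱ₁RZ + X)/(ϱ₁(Y + ϱ₁R)). Then there exists u₀ > 0 such that for all u ≥ u₀: p₁ > 0 and ε₁ > 0. -/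

import Mathlib

noncomputable section

/-- `B = ϱ₋ϱ₊u² − (ϱ₊ − ϱ₋)(p₊ − p₋)`. -/
def Bu (ϱm ϱp pm pp u : ℝ) : ℝ := ϱm * ϱp * u ^ 2 - (ϱp - ϱm) * (pp - pm)

/-- The left interface speed `μ₀ = A/R − (1/R)·√(B(ϱ₁−ϱ₊)/(ϱ₁−ϱ₋))`,
with `v₋` fixed and `v₊ = v₋ − u`. -/
def mu0u (ϱm ϱp pm pp ϱ1 vm u : ℝ) : ℝ :=
  (ϱm * vm - ϱp * (vm - u)) / (ϱm - ϱp) -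
    (1 / (ϱm - ϱp)) * Real.sqrt (Bu ϱm ϱp pm pp u * ((ϱ1 - ϱp) / (ϱ1 - ϱm)))

/-- The right interface speed `μ₁ = A/R − (1/R)·√(B(ϱ₁−ϱ₋)/(ϱ₁−ϱ₊))`,
with `v₋` fixed and `v₊ = v₋ − u`. -/
def mu1u (ϱm ϱp pm pp ϱ1 vm u : ℝ) : ℝ :=
  (ϱm * vm - ϱp * (vm - u)) / (ϱm - ϱp) -
    (1 / (ϱm - ϱp)) * Real.sqrt (Bu ϱm ϱp pm pp u * ((ϱ1 - ϱm) / (ϱ1 - ϱp)))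

/-- `Y = ϱ₁ϱ₊·(v₋+μ₀)/(v₋−μ₀) + ϱ₁ϱ₋·(μ₁+v₊)/(μ₁−v₊)`. -/
def Yu (ϱm ϱp pm pp ϱ1 vm u : ℝ) : ℝ :=
  ϱ1 * ϱp * ((vm + mu0u ϱm ϱp pm pp ϱ1 vm u) / (vm - mu0u ϱm ϱp pm pp ϱ1 vm u)) +
  ϱ1 * ϱm * ((mu1u ϱm ϱp pm pp ϱ1 vm u + (vm - u)) /
    (mu1u ϱm ϱp pm pp ϱ1 vm u - (vm - u)))

/-- `X = ϱ₊ϱ₋(p₋ − p₊) + (2c_v+1)ϱ₁(ϱ₋p₊ − ϱ₊p₋)`. -/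
def Xu (cv ϱm ϱp pm pp ϱ1 : ℝ) : ℝ :=
  ϱp * ϱm * (pm - pp) + (2 * cv + 1) * ϱ1 * (ϱm * pp - ϱp * pm)

/-- `Z = p₊ + ((ϱ₁−ϱ₊)ϱ₊/ϱ₁)(v₊ − μ₁)²`, with `v₊ = v₋ − u`. -/
def Zu (ϱm ϱp pm pp ϱ1 vm u : ℝ) : ℝ :=
  pp + ((ϱ1 - ϱp) * ϱp / ϱ1) * ((vm - u) - mu1u ϱm ϱp pm pp ϱ1 vm u) ^ 2

/-- The middle pressure `p₁ = (YZ − X)/(Y + ϱ₁R)` with `R = ϱ₋ − ϱ₊`. -/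
def p1u (cv ϱm ϱp pm pp ϱ1 vm u : ℝ) : ℝ :=
  (Yu ϱm ϱp pm pp ϱ1 vm u * Zu ϱm ϱp pm pp ϱ1 vm u - Xu cv ϱm ϱp pm pp ϱ1) /
    (Yu ϱm ϱp pm pp ϱ1 vm u + ϱ1 * (ϱm - ϱp))

/-- The subsolution parameter `ε₁ = (ϱ₁RZ + X)/(ϱ₁(Y + ϱ₁R))` with `R = ϱ₋ − ϱ₊`. -/
def eps1u (cv ϱm ϱp pm pp ϱ1 vm u : ℝ) : ℝ :=
  (ϱ1 * (ϱm - ϱp) * Zu ϱm ϱp pm pp ϱ1 vm u + Xu cv ϱm ϱp pm pp ϱ1) /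
    (ϱ1 * (Yu ϱm ϱp pm pp ϱ1 vm u + ϱ1 * (ϱm - ϱp)))

/-- The second component `β = (ϱ₊v₊ + μ₁(ϱ₁−ϱ₊))/ϱ₁` of the middle velocity,
with `v₊ = v₋ − u`. -/
def betau (ϱm ϱp pm pp ϱ1 vm u : ℝ) : ℝ :=
  (ϱp * (vm - u) + mu1u ϱm ϱp pm pp ϱ1 vm u * (ϱ1 - ϱp)) / ϱ1

/-- The subsolution parameter `ε₂`. -/
def eps2u (cv ϱm ϱp pm pp ϱ1 vm u : ℝ) : ℝ :=
  (1 / (ϱ1 * ϱp)) *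
      ((ϱ1 - ϱp) * (p1u cv ϱm ϱp pm pp ϱ1 vm u + pp) +
        2 * cv * (ϱ1 * pp - ϱp * p1u cv ϱm ϱp pm pp ϱ1 vm u)) +
    eps1u cv ϱm ϱp pm pp ϱ1 vm u *
      (((vm - u) + betau ϱm ϱp pm pp ϱ1 vm u) /
          ((vm - u) - betau ϱm ϱp pm pp ϱ1 vm u) * ((ϱ1 - ϱp) / ϱp) - 1)

/-!
As `u → ∞` we have `B ~ ϱ₋ϱ₊u²`, so both interface speeds grow linearly, `μ/u → speedSlope`.
Hence the first quotient in `Y` tends to `-1` and the second to `(c₁ - 1)/(c₁ + 1) < 1`, where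
`c₁ + 1 > 0` is the growth rate of `μ₁ - v₊`; so `Y` tends to a limit `L < ϱ₁R < 0`, while `Z`
grows like `u²`. Thus the numerators `YZ - X` and `ϱ₁RZ + X` of `p₁` and `ε₁` tend to `-∞`,
and their denominators tend to the negative limits `L + ϱ₁R` and `ϱ₁(L + ϱ₁R)`.
-/

open Filter Topology

lemma tendsto_sqrt_quadratic_div_atTop (a b : ℝ) :
    Tendsto (fun u : ℝ => √(a * u ^ 2 + b) / u) atTop (𝓝 √a) := by
  have hlim : Tendsto (fun u : ℝ => √(a + b * (u ^ 2)⁻¹)) atTop (𝓝 √a) := by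
    have h := ((tendsto_pow_atTop two_ne_zero).inv_tendsto_atTop.const_mul b).const_add a
    rw [mul_zero, add_zero] at h
    exact (Real.continuous_sqrt.tendsto a).comp h
  refine hlim.congr' ?_
  filter_upwards [eventually_gt_atTop 0] with u hu
  have hsplit : a + b * (u ^ 2)⁻¹ = (a * u ^ 2 + b) / u ^ 2 := by field_simp
  rw [hsplit, Real.sqrt_div' _ (sq_nonneg u), Real.sqrt_sq hu.le]

lemma tendsto_affine_div_atTop {f : ℝ → ℝ} {a : ℝ}
    (hf : Tendsto (fun u => f u / u) atTop (𝓝 a)) (c d e : ℝ) :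
    Tendsto (fun u => (c + d * u + e * f u) / u) atTop (𝓝 (d + e * a)) := by
  have h := ((tendsto_const_nhds (x := c)).div_atTop tendsto_id).add
    ((tendsto_const_nhds (x := d)).add (hf.const_mul e))
  rw [zero_add] at h
  refine h.congr' ?_
  filter_upwards [eventually_ne_atTop 0] with u hu
  simp only [id]
  field_simp
  ring

lemma tendsto_div_of_tendsto_div_atTop {f g : ℝ → ℝ} {a b : ℝ}
    (hf : Tendsto (fun u => f u / u) atTop (𝓝 a))
    (hg : Tendsto (fun u => g u / u) atTop (𝓝 b)) (hb : b ≠ 0) :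
    Tendsto (fun u => f u / g u) atTop (𝓝 (a / b)) := by
  refine (hf.div hg hb).congr' ?_
  filter_upwards [eventually_ne_atTop 0] with u hu
  exact div_div_div_cancel_right₀ hu _ _

lemma tendsto_sq_atTop_of_tendsto_div_atTop {f : ℝ → ℝ} {a : ℝ}
    (hf : Tendsto (fun u => f u / u) atTop (𝓝 a)) (ha : a ≠ 0) :
    Tendsto (fun u => f u ^ 2) atTop atTop := by
  refine ((hf.pow 2).pos_mul_atTop (by positivity) (tendsto_pow_atTop two_ne_zero)).congr' ?_
  filter_upwards [eventually_ne_atTop 0] with u hu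
  field_simp

lemma eventually_div_pos_of_tendsto_atBot {α : Type*} {l : Filter α} {f g : α → ℝ} {b : ℝ}
    (hf : Tendsto f l atBot) (hg : Tendsto g l (𝓝 b)) (hb : b < 0) :
    ∀ᶠ x in l, 0 < f x / g x := by
  filter_upwards [hf.eventually_lt_atBot 0, hg.eventually_lt_const hb] with x hfx hgx
  exact div_pos_of_neg_of_neg hfx hgx

/-- The growth rate `lim μ/u` of an interface speed `A/R − √(B k)/R` as `u → ∞`. -/
def speedSlope (ϱm ϱp k : ℝ) : ℝ := (ϱp - √(ϱm * ϱp * k)) / (ϱm - ϱp)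

lemma tendsto_interfaceSpeed_div_atTop (ϱm ϱp pm pp vm k : ℝ) (hR : ϱm - ϱp ≠ 0) :
    Tendsto (fun u => ((ϱm * vm - ϱp * (vm - u)) / (ϱm - ϱp) -
        1 / (ϱm - ϱp) * √(Bu ϱm ϱp pm pp u * k)) / u) atTop (𝓝 (speedSlope ϱm ϱp k)) := by
  have hB : ∀ u, Bu ϱm ϱp pm pp u * k = ϱm * ϱp * k * u ^ 2 - (ϱp - ϱm) * (pp - pm) * k :=
    fun u => by rw [Bu]; ring
  have h := tendsto_affine_div_atTop (tendsto_sqrt_quadratic_div_atTop (ϱm * ϱp * k)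
    (-((ϱp - ϱm) * (pp - pm) * k))) ((ϱm * vm - ϱp * vm) / (ϱm - ϱp)) (ϱp / (ϱm - ϱp))
    (-(1 / (ϱm - ϱp)))
  convert h using 2 with u
  · simp only [hB, ← sub_eq_add_neg]
    ring
  · rw [speedSlope]
    field_simp
    ring

section

variable {ϱm ϱp k : ℝ}

lemma speedSlope_ne_zero (hϱm : 0 < ϱm) (hϱmp : ϱm < ϱp) (hk : k ≤ 1) :
    speedSlope ϱm ϱp k ≠ 0 := by
  have hϱp : 0 < ϱp := hϱm.trans hϱmp
  have hs : √(ϱm * ϱp * k) < ϱp := by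
    rw [Real.sqrt_lt' hϱp]
    nlinarith [mul_pos hϱm hϱp]
  exact div_ne_zero (by linarith) (by linarith)

lemma speedSlope_add_one_pos (hϱm : 0 < ϱm) (hϱmp : ϱm < ϱp) (hk : 1 ≤ k) :
    0 < speedSlope ϱm ϱp k + 1 := by
  have hs : ϱm < √(ϱm * ϱp * k) := by
    rw [Real.lt_sqrt hϱm.le]
    nlinarith [mul_pos hϱm (hϱm.trans hϱmp)]
  rw [speedSlope, div_add_one (by linarith)]
  exact div_pos_of_neg_of_neg (by linarith) (by linarith)

end

section

variable {ϱm ϱp ϱ1 : ℝ} (pm pp vm : ℝ)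

lemma tendsto_mu1u_div_atTop (hϱmp : ϱm < ϱp) :
    Tendsto (fun u => mu1u ϱm ϱp pm pp ϱ1 vm u / u) atTop
      (𝓝 (speedSlope ϱm ϱp ((ϱ1 - ϱm) / (ϱ1 - ϱp)))) :=
  tendsto_interfaceSpeed_div_atTop ϱm ϱp pm pp vm _ (sub_neg.mpr hϱmp).ne

lemma exists_tendsto_Yu_lt (hϱm : 0 < ϱm) (hϱmp : ϱm < ϱp) (hϱ1 : ϱp < ϱ1) :
    ∃ L < ϱ1 * (ϱm - ϱp), Tendsto (fun u => Yu ϱm ϱp pm pp ϱ1 vm u) atTop (𝓝 L) := by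
  set c0 := speedSlope ϱm ϱp ((ϱ1 - ϱp) / (ϱ1 - ϱm))
  set c1 := speedSlope ϱm ϱp ((ϱ1 - ϱm) / (ϱ1 - ϱp))
  have hmu0 : Tendsto (fun u => mu0u ϱm ϱp pm pp ϱ1 vm u / u) atTop (𝓝 c0) :=
    tendsto_interfaceSpeed_div_atTop ϱm ϱp pm pp vm _ (sub_neg.mpr hϱmp).ne
  have hc0 : c0 ≠ 0 := speedSlope_ne_zero hϱm hϱmp ((div_le_one (by linarith)).mpr (by linarith))
  have hc1 : 0 < c1 + 1 :=
    speedSlope_add_one_pos hϱm hϱmp ((one_le_div (by linarith)).mpr (by linarith))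
  have hratio0 : Tendsto (fun u => (vm + mu0u ϱm ϱp pm pp ϱ1 vm u) /
      (vm - mu0u ϱm ϱp pm pp ϱ1 vm u)) atTop (𝓝 (-1)) := by
    convert tendsto_div_of_tendsto_div_atTop (tendsto_affine_div_atTop hmu0 vm 0 1)
      (tendsto_affine_div_atTop hmu0 vm 0 (-1)) (by simpa using hc0) using 2 with u
    · ring
    · simp [hc0]
  have hratio1 : Tendsto (fun u => (mu1u ϱm ϱp pm pp ϱ1 vm u + (vm - u)) /
      (mu1u ϱm ϱp pm pp ϱ1 vm u - (vm - u))) atTop (𝓝 ((c1 - 1) / (c1 + 1))) := by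
    have hmu1 := tendsto_mu1u_div_atTop pm pp vm (ϱ1 := ϱ1) hϱmp
    convert tendsto_div_of_tendsto_div_atTop (tendsto_affine_div_atTop hmu1 vm (-1) 1)
      (tendsto_affine_div_atTop hmu1 (-vm) 1 1) (by linarith) using 2 with u
    · ring
    · ring
  refine ⟨ϱ1 * ϱp * (-1) + ϱ1 * ϱm * ((c1 - 1) / (c1 + 1)), ?_,
    (hratio0.const_mul _).add (hratio1.const_mul _)⟩
  have hq : (c1 - 1) / (c1 + 1) < 1 := (div_lt_one hc1).mpr (by linarith)
  nlinarith [mul_pos (hϱm.trans (hϱmp.trans hϱ1)) hϱm]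

lemma tendsto_Zu_atTop (hϱm : 0 < ϱm) (hϱmp : ϱm < ϱp) (hϱ1 : ϱp < ϱ1) :
    Tendsto (fun u => Zu ϱm ϱp pm pp ϱ1 vm u) atTop atTop := by
  set c1 := speedSlope ϱm ϱp ((ϱ1 - ϱm) / (ϱ1 - ϱp))
  have hc1 : 0 < c1 + 1 :=
    speedSlope_add_one_pos hϱm hϱmp ((one_le_div (by linarith)).mpr (by linarith))
  have hgap : Tendsto (fun u => ((vm - u) - mu1u ϱm ϱp pm pp ϱ1 vm u) / u) atTop
      (𝓝 (-1 - c1)) := by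
    convert tendsto_affine_div_atTop (tendsto_mu1u_div_atTop pm pp vm (ϱ1 := ϱ1) hϱmp)
      vm (-1) (-1) using 2 with u
    · ring
    · ring
  have hK : 0 < (ϱ1 - ϱp) * ϱp / ϱ1 :=
    div_pos (mul_pos (by linarith) (by linarith)) (by linarith)
  exact tendsto_atTop_add_const_left _ pp
    ((tendsto_sq_atTop_of_tendsto_div_atTop hgap (by linarith)).const_mul_atTop hK)

end

theorem p1_eps1_positive_large_u_general
    (cv ϱm ϱp pm pp ϱ1 vm : ℝ)
    (hϱm : 0 < ϱm) (hϱmp : ϱm < ϱp)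
    (hϱ1 : ϱp < ϱ1) :
    ∃ u0 : ℝ, 0 < u0 ∧ ∀ u : ℝ, u0 ≤ u →
      0 < p1u cv ϱm ϱp pm pp ϱ1 vm u ∧
      0 < eps1u cv ϱm ϱp pm pp ϱ1 vm u := by
  obtain ⟨L, hL, hY⟩ := exists_tendsto_Yu_lt pm pp vm hϱm hϱmp hϱ1
  have hZ := tendsto_Zu_atTop pm pp vm hϱm hϱmp hϱ1
  have hϱ1pos : 0 < ϱ1 := hϱm.trans (hϱmp.trans hϱ1)
  have hR : ϱm - ϱp < 0 := sub_neg.mpr hϱmp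
  have hden := hY.add_const (ϱ1 * (ϱm - ϱp))
  have hden_neg : L + ϱ1 * (ϱm - ϱp) < 0 := by nlinarith
  have hp1 : ∀ᶠ u in atTop, 0 < p1u cv ϱm ϱp pm pp ϱ1 vm u :=
    eventually_div_pos_of_tendsto_atBot
      (tendsto_atBot_add_const_right _ _ (hY.neg_mul_atTop (by nlinarith) hZ)) hden hden_neg
  have heps1 : ∀ᶠ u in atTop, 0 < eps1u cv ϱm ϱp pm pp ϱ1 vm u :=
    eventually_div_pos_of_tendsto_atBot
      (tendsto_atBot_add_const_right _ _ (hZ.const_mul_atTop_of_neg (by nlinarith)))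
      (hden.const_mul ϱ1) (by nlinarith)
  obtain ⟨a, ha⟩ := eventually_atTop.mp (hp1.and heps1)
  exact ⟨max a 1, by positivity, fun u hu => ha u (le_of_max_le_left hu)⟩

/-- **Lemma (positivity of the middle pressure `p₁` and of `ε₁`, case
`ϱ₋ < ϱ₊`).** For `u = v₋ − v₊` sufficiently large (with `v₋` fixed), both
`p₁ = (YZ − X)/(Y + ϱ₁R)` and `ε₁ = (ϱ₁RZ + X)/(ϱ₁(Y + ϱ₁R))` are positive. -/
theorem p1_eps1_positive_large_u
    (cv ϱm ϱp pm pp ϱ1 vm : ℝ)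
    (hcv : 0 < cv) (hϱm : 0 < ϱm) (hϱmp : ϱm < ϱp)
    (hpm : 0 < pm) (hpp : 0 < pp) (hϱ1 : ϱp < ϱ1) :
    ∃ u0 : ℝ, 0 < u0 ∧ ∀ u : ℝ, u0 ≤ u →
      0 < p1u cv ϱm ϱp pm pp ϱ1 vm u ∧
      0 < eps1u cv ϱm ϱp pm pp ϱ1 vm u :=
  p1_eps1_positive_large_u_general cv ϱm ϱp pm pp ϱ1 vm hϱm hϱmp hϱ1
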